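/- arXiv:math/0102223 — 2 statements merged into one kernel-verified Lean document; each statement's English description precedes it below -/
import Mathlib

section
/- For all positive integers n, k and every partition α with at most k parts each at most n, the multiset of arm–leg pairs of SQ equals the disjoint union of the multiset of arm–leg pairs of R and the multiset of arm–leg pairs of D; that is, AL(SQ) = AL(R) ⊎ AL(D) as multisets of pairs. -/
/-- The skew diagram with rows `a,…,b`, where row `i` contains the cells
`(i,j)` for `lo i ≤ j ≤ hi i`. -/
def skewD (a b : ℕ) (lo hi : ℕ → ℕ) : Finset (ℕ × ℕ) :=
  (Finset.Icc a b).biUnion fun i => (Finset.Icc (lo i) (hi i)).image fun j => (i, j)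

/-- Arm length: number of cells of `G` in the same row, strictly to the right. -/
def arm (G : Finset (ℕ × ℕ)) (x : ℕ × ℕ) : ℕ :=
  (G.filter fun y => y.1 = x.1 ∧ x.2 < y.2).card

/-- Leg length: number of cells of `G` in the same column, strictly below
(rows are numbered bottom to top). -/
def leg (G : Finset (ℕ × ℕ)) (x : ℕ × ℕ) : ℕ :=
  (G.filter fun y => y.2 = x.2 ∧ y.1 < x.1).card

/-- Multiset of arm–leg pairs of the cells of `E`, computed in `G`. -/
def AL (G E : Finset (ℕ × ℕ)) : Multiset (ℕ × ℕ) :=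
  E.val.map fun x => (arm G x, leg G x)

/-- Multiset of hook lengths of `G`. -/
def hookMS (G : Finset (ℕ × ℕ)) : Multiset ℕ :=
  G.val.map fun x => arm G x + leg G x + 1

/-- The skew diagram `T`. -/
def TT (n k : ℕ) (α : ℕ → ℕ) : Finset (ℕ × ℕ) :=
  skewD 1 k (fun i => α 1 - α i + 1) (fun i => n + α 1 - α i)

/-- The skew diagram `V`. -/
def VV (n k : ℕ) (α : ℕ → ℕ) : Finset (ℕ × ℕ) :=
  skewD (k + 1) (2 * k) (fun i => n + α 1 - α (i - k) + 1) (fun _ => n + α 1)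

/-- The skew diagram `SQ = T ∪ V`. -/
def SQ (n k : ℕ) (α : ℕ → ℕ) : Finset (ℕ × ℕ) :=
  TT n k α ∪ VV n k α

/-- The `k × n` rectangle `R`. -/
def RR (n k : ℕ) : Finset (ℕ × ℕ) :=
  skewD 1 k (fun _ => 1) (fun _ => n)

/-- The Young diagram `D` of `α`. -/
def DD (k : ℕ) (α : ℕ → ℕ) : Finset (ℕ × ℕ) :=
  skewD 1 k (fun _ => 1) (fun i => α (k + 1 - i))

/-- The 180° rotation `T*` of `T`. -/
def Tstar (n k : ℕ) (α : ℕ → ℕ) : Finset (ℕ × ℕ) :=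
  skewD 1 k (fun i => α (k + 1 - i) - α k + 1) (fun i => n + α (k + 1 - i) - α k)

open Finset

lemma mem_skewD {a b : ℕ} {lo hi : ℕ → ℕ} {x : ℕ × ℕ} :
    x ∈ skewD a b lo hi ↔ a ≤ x.1 ∧ x.1 ≤ b ∧ lo x.1 ≤ x.2 ∧ x.2 ≤ hi x.1 := by
  obtain ⟨i, j⟩ := x
  simp only [skewD, mem_biUnion, mem_image, mem_Icc, Prod.mk.injEq]
  constructor
  · rintro ⟨u, ⟨h1, h2⟩, v, ⟨h3, h4⟩, rfl, rfl⟩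
    exact ⟨h1, h2, h3, h4⟩
  · rintro ⟨h1, h2, h3, h4⟩
    exact ⟨i, ⟨h1, h2⟩, j, ⟨h3, h4⟩, rfl, rfl⟩

lemma arm_skewD {a b : ℕ} {lo hi : ℕ → ℕ} {i j : ℕ} (ha : a ≤ i) (hb : i ≤ b)
    (hj : lo i ≤ j + 1) : arm (skewD a b lo hi) (i, j) = hi i - j := by
  have : (skewD a b lo hi).filter (fun y => y.1 = (i,j).1 ∧ (i,j).2 < y.2)
      = (Finset.Icc (j+1) (hi i)).image fun q => (i, q) := by
    ext ⟨u, v⟩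
    simp only [mem_filter, mem_skewD, mem_image, mem_Icc, Prod.mk.injEq]
    constructor
    · rintro ⟨⟨h1, h2, h3, h4⟩, rfl, h6⟩
      exact ⟨v, ⟨h6, h4⟩, rfl, rfl⟩
    · rintro ⟨w, ⟨h1, h2⟩, rfl, rfl⟩
      exact ⟨⟨ha, hb, by omega, h2⟩, rfl, h1⟩
  rw [arm, this, Finset.card_image_of_injective _ (by intro x y h; simpa using h),
    Nat.card_Icc]
  omega

lemma leg_skewD {a b : ℕ} {lo hi : ℕ → ℕ} (i j : ℕ) :
    leg (skewD a b lo hi) (i, j)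
      = ((Finset.Icc a b).filter fun u => u < i ∧ lo u ≤ j ∧ j ≤ hi u).card := by
  have : (skewD a b lo hi).filter (fun y => y.2 = (i,j).2 ∧ y.1 < (i,j).1)
      = ((Finset.Icc a b).filter fun u => u < i ∧ lo u ≤ j ∧ j ≤ hi u).image fun u => (u, j) := by
    ext ⟨u, v⟩
    simp only [mem_filter, mem_skewD, mem_image, mem_Icc, Prod.mk.injEq]
    constructor
    · rintro ⟨⟨h1, h2, h3, h4⟩, rfl, h6⟩
      exact ⟨u, ⟨⟨h1, h2⟩, h6, h3, h4⟩, rfl, rfl⟩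
    · rintro ⟨w, ⟨⟨h1, h2⟩, h3, h4, h5⟩, rfl, rfl⟩
      exact ⟨⟨h1, h2, h4, h5⟩, rfl, h3⟩
  rw [leg, this, Finset.card_image_of_injective _ (by intro x y h; simpa using h)]

lemma val_skewD (a b : ℕ) (lo hi : ℕ → ℕ) :
    (skewD a b lo hi).val
      = (Finset.Icc a b).val.bind fun i => (Finset.Icc (lo i) (hi i)).val.map fun j => (i, j) := by
  rw [skewD, ← Finset.disjiUnion_eq_biUnion _ _ ?hd]
  · rw [Finset.disjiUnion_val]
    apply Multiset.bind_congr
    intro i _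
    exact Finset.image_val_of_injOn (by intro x _ y _ h; simpa using h)
  case hd =>
    intro u _ v _ huv
    apply Finset.disjoint_left.mpr
    rintro ⟨p, q⟩ hp hq
    simp only [Finset.mem_image] at hp hq
    obtain ⟨_, _, h1⟩ := hp; obtain ⟨_, _, h2⟩ := hq
    apply huv
    have e1 := congrArg Prod.fst h1
    have e2 := congrArg Prod.fst h2
    simp at e1 e2
    omega

lemma AL_skewD (G : Finset (ℕ × ℕ)) (a b : ℕ) (lo hi : ℕ → ℕ) :
    AL G (skewD a b lo hi)
      = (Finset.Icc a b).val.bind fun i =>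
          (Finset.Icc (lo i) (hi i)).val.map fun j => (arm G (i, j), leg G (i, j)) := by
  rw [AL, val_skewD, Multiset.map_bind]
  apply Multiset.bind_congr
  intro i _
  rw [Multiset.map_map]
  rfl

/-- `Fc α a i` = number of `u ∈ [1, i-1]` with `α u ≤ α i + a`. -/
def Fc (α : ℕ → ℕ) (a i : ℕ) : ℕ := ((Finset.Icc 1 (i-1)).filter fun u => α u ≤ α i + a).card

/-- `Hc α k a i` = number of `u ∈ [i+1, k]` with `α i ≤ α u + a`. -/
def Hc (α : ℕ → ℕ) (k a i : ℕ) : ℕ := ((Finset.Icc (i+1) k).filter fun u => α i ≤ α u + a).card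

lemma shift_card (a b : ℕ) (p : ℕ → Prop) [DecidablePred p] :
    ((Finset.Icc (a+1) (b+1)).filter p).card = ((Finset.Icc a b).filter fun u => p (u+1)).card := by
  rw [← Finset.image_add_right_Icc, Finset.filter_image,
    Finset.card_image_of_injective _ (add_left_injective 1)]

lemma filter_decr_eq_Icc (k : ℕ) (p : ℕ → Prop) [DecidablePred p]
    (hp : ∀ i j, 1 ≤ i → i ≤ j → j ≤ k → p j → p i) :
    (Finset.Icc 1 k).filter p = Finset.Icc 1 (((Finset.Icc 1 k).filter p).card) := by
  set S := (Finset.Icc 1 k).filter p with hS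
  by_cases hne : S = ∅
  · rw [hne]; simp [hne]
  · obtain ⟨M, hM, hMmax⟩ := S.exists_max_image id (Finset.nonempty_of_ne_empty hne)
    have hsub : Finset.Icc 1 M ⊆ S := by
      intro u hu
      rw [Finset.mem_Icc] at hu
      rw [hS, Finset.mem_filter, Finset.mem_Icc]
      rw [hS, Finset.mem_filter, Finset.mem_Icc] at hM
      exact ⟨⟨hu.1, le_trans hu.2 hM.1.2⟩, hp u M hu.1 hu.2 hM.1.2 hM.2⟩
    have hsub2 : S ⊆ Finset.Icc 1 M := by
      intro u hu
      have := hMmax u hu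
      rw [hS, Finset.mem_filter, Finset.mem_Icc] at hu
      rw [Finset.mem_Icc]
      exact ⟨hu.1.1, this⟩
    have hSM : S = Finset.Icc 1 M := le_antisymm hsub2 hsub
    rw [hSM, Nat.card_Icc]
    congr 1

lemma icc_succ_val (k : ℕ) :
    (Finset.Icc 1 (k+1)).val = 1 ::ₘ (Finset.Icc 1 k).val.map (· + 1) := by
  have h1 : Finset.Icc 1 (k+1) = insert 1 ((Finset.Icc 1 k).image (· + 1)) := by
    rw [Finset.image_add_right_Icc]
    ext u; simp [Finset.mem_Icc]; omega
  rw [h1, Finset.insert_val_of_notMem (by rw [Finset.image_add_right_Icc]; simp),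
    Finset.image_val_of_injOn (Set.injOn_of_injective (add_left_injective 1))]

lemma icc_split_val (s k : ℕ) (hsk : s ≤ k) :
    (Finset.Icc 1 k).val = (Finset.Icc 1 s).val + (Finset.Icc (s+1) k).val := by
  have hdisj : Disjoint (Finset.Icc 1 s) (Finset.Icc (s+1) k) := by
    apply Finset.disjoint_left.mpr
    intro u hu hv
    rw [Finset.mem_Icc] at hu hv
    omega
  have : Finset.Icc 1 k = (Finset.Icc 1 s).disjUnion (Finset.Icc (s+1) k) hdisj := by
    ext u; simp [Finset.mem_Icc]; omega
  rw [this]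
  rfl


lemma zero_cons_icc (s : ℕ) :
    (0 : ℕ) ::ₘ (Finset.Icc 1 s).val.map id
      = s ::ₘ (Finset.Icc 1 s).val.map (· - 1) := by
  rcases s with _ | t
  · simp
  · rw [Multiset.map_id]
    have e1 : (Finset.Icc 1 (t+1)).val.map (· - 1) = (Finset.Icc 0 t).val := by
      rw [← Finset.image_val_of_injOn]
      · congr 1
        ext u
        simp only [Finset.mem_image, Finset.mem_Icc]
        constructor
        · rintro ⟨v, ⟨hv1, hv2⟩, rfl⟩; omega
        · intro h; exact ⟨u+1, ⟨by omega, by omega⟩, by omega⟩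
      · intro x hx y hy h
        simp only [Finset.coe_Icc, Set.mem_Icc] at hx hy
        have h' : x - 1 = y - 1 := h
        omega
    rw [e1]
    have e2 : (0 : ℕ) ::ₘ (Finset.Icc 1 (t+1)).val = (Finset.Icc 0 (t+1)).val := by
      rw [← Finset.insert_val_of_notMem (by simp)]
      congr 1
      ext u; simp [Finset.mem_Icc]; omega
    have e3 : (t+1) ::ₘ (Finset.Icc 0 t).val = (Finset.Icc 0 (t+1)).val := by
      rw [← Finset.insert_val_of_notMem (by simp)]
      congr 1
      ext u; simp [Finset.mem_Icc]; omega
    rw [e2, e3]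

lemma core (a : ℕ) : ∀ (k : ℕ) (α : ℕ → ℕ),
    (∀ i j, 1 ≤ i → i ≤ j → j ≤ k → α j ≤ α i) →
    (Finset.Icc 1 k).val.map (Fc α a) = (Finset.Icc 1 k).val.map (Hc α k a) := by
  intro k
  induction k with
  | zero => intro α _; simp
  | succ k IH =>
    intro α hmono
    set α' : ℕ → ℕ := fun u => α (u+1) with hα'
    have hmono' : ∀ i j, 1 ≤ i → i ≤ j → j ≤ k → α' j ≤ α' i := by
      intro i j h1 h2 h3
      exact hmono (i+1) (j+1) (by omega) (by omega) (by omega)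
    set s := Hc α (k+1) a 1 with hs
    -- s ≤ k
    have hsk : s ≤ k := by
      rw [hs, Hc]
      calc ((Finset.Icc 2 (k+1)).filter fun u => α 1 ≤ α u + a).card
          ≤ (Finset.Icc 2 (k+1)).card := Finset.card_filter_le _ _
        _ = k := by rw [Nat.card_Icc]; omega
    -- the s-characterization
    have hchar : ∀ i, 1 ≤ i → i ≤ k → ((α 1 ≤ α (i+1) + a) ↔ i ≤ s) := by
      have hcard : s = ((Finset.Icc 1 k).filter fun u => α 1 ≤ α (u+1) + a).card := by
        rw [hs, Hc, show (1:ℕ)+1 = 0+1+1 by rfl, show k+1 = k+1 by rfl]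
        exact shift_card 1 k _
      have heq := filter_decr_eq_Icc k (fun u => α 1 ≤ α (u+1) + a)
        (by intro i j h1 h2 h3 hj
            exact le_trans hj (by have := hmono (i+1) (j+1) (by omega) (by omega) (by omega); omega))
      intro i h1 h2
      constructor
      · intro h
        have : i ∈ (Finset.Icc 1 k).filter fun u => α 1 ≤ α (u+1) + a := by
          rw [Finset.mem_filter, Finset.mem_Icc]; exact ⟨⟨h1, h2⟩, h⟩
        rw [heq, Finset.mem_Icc] at this
        omega
      · intro h
        have : i ∈ Finset.Icc 1 (((Finset.Icc 1 k).filter fun u => α 1 ≤ α (u+1) + a).card) := by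
          rw [Finset.mem_Icc]; omega
        rw [← heq, Finset.mem_filter] at this
        exact this.2
    -- f1
    have f1 : ∀ i, 1 ≤ i → i ≤ k →
        Fc α a (i+1) = Fc α' a i + (if i ≤ s then 1 else 0) := by
      intro i h1 h2
      have hi : i + 1 - 1 = i := by omega
      rw [Fc, hi]
      have hins : Finset.Icc 1 i = insert 1 (Finset.Icc 2 i) := by
        ext u; simp [Finset.mem_Icc]; omega
      have h2i : ((Finset.Icc 2 i).filter fun u => α u ≤ α (i+1) + a).card = Fc α' a i := by
        rw [Fc]
        have : Finset.Icc 2 i = Finset.Icc (1+1) ((i-1)+1) := by congr 1; omega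
        rw [this, shift_card]
      rw [hins, Finset.filter_insert]
      have h1n : (1:ℕ) ∉ (Finset.Icc 2 i).filter fun u => α u ≤ α (i+1) + a := by
        simp [Finset.mem_Icc]
      have hiff := hchar i h1 h2
      split_ifs with hc hc2 hc2
      · rw [Finset.card_insert_of_notMem h1n]
        omega
      · exact absurd (hiff.mp hc) hc2
      · exact absurd (hiff.mpr hc2) hc
      · omega
    -- f2
    have f2 : ∀ i, Hc α (k+1) a (i+1) = Hc α' k a i := by
      intro i
      rw [Hc, Hc, show i+1+1 = (i+1)+1 by rfl, shift_card]
    -- f5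
    have f5 : ∀ i, 1 ≤ i → i ≤ s → Fc α' a i = i - 1 := by
      intro i h1 h2
      rw [Fc, Finset.filter_true_of_mem, Nat.card_Icc]
      · omega
      · intro u hu
        rw [Finset.mem_Icc] at hu
        have hu1 : α (u+1) ≤ α 1 := hmono 1 (u+1) le_rfl (by omega) (by omega)
        have := (hchar i h1 (by omega)).mpr h2
        calc α' u = α (u+1) := rfl
          _ ≤ α 1 := hu1
          _ ≤ α (i+1) + a := this
          _ = α' i + a := rfl
    -- assemble
    rw [icc_succ_val, Multiset.map_cons, Multiset.map_cons, Multiset.map_map, Multiset.map_map]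
    have hF1 : Fc α a 1 = 0 := by rw [Fc]; simp
    have hH1 : Hc α (k+1) a 1 = s := rfl
    rw [hF1, hH1]
    have hmapF : (Finset.Icc 1 k).val.map ((Fc α a) ∘ (· + 1))
        = (Finset.Icc 1 k).val.map (fun i => Fc α' a i + (if i ≤ s then 1 else 0)) := by
      apply Multiset.map_congr rfl
      intro i hi
      have hi' : i ∈ Finset.Icc 1 k := hi
      rw [Finset.mem_Icc] at hi'
      exact f1 i hi'.1 hi'.2
    have hmapH : (Finset.Icc 1 k).val.map ((Hc α (k+1) a) ∘ (· + 1))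
        = (Finset.Icc 1 k).val.map (Fc α' a) := by
      rw [show (Hc α (k+1) a) ∘ (· + 1) = Hc α' k a from funext f2]
      exact (IH α' hmono').symm
    rw [hmapF, hmapH]
    rw [icc_split_val s k hsk, Multiset.map_add, Multiset.map_add]
    have hL1 : (Finset.Icc 1 s).val.map (fun i => Fc α' a i + (if i ≤ s then 1 else 0))
        = (Finset.Icc 1 s).val.map id := by
      apply Multiset.map_congr rfl
      intro i hi
      have hi' : i ∈ Finset.Icc 1 s := hi
      rw [Finset.mem_Icc] at hi'
      rw [f5 i hi'.1 hi'.2, if_pos hi'.2, id]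
      omega
    have hL2 : (Finset.Icc (s+1) k).val.map (fun i => Fc α' a i + (if i ≤ s then 1 else 0))
        = (Finset.Icc (s+1) k).val.map (Fc α' a) := by
      apply Multiset.map_congr rfl
      intro i hi
      have hi' : i ∈ Finset.Icc (s+1) k := hi
      rw [Finset.mem_Icc] at hi'
      rw [if_neg (by omega)]
      omega
    have hR1 : (Finset.Icc 1 s).val.map (Fc α' a)
        = (Finset.Icc 1 s).val.map (· - 1) := by
      apply Multiset.map_congr rfl
      intro i hi
      have hi' : i ∈ Finset.Icc 1 s := hi
      rw [Finset.mem_Icc] at hi'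
      exact f5 i hi'.1 hi'.2
    rw [hL1, hL2, hR1]
    have key := zero_cons_icc s
    calc (0 : ℕ) ::ₘ ((Finset.Icc 1 s).val.map id + (Finset.Icc (s+1) k).val.map (Fc α' a))
        = ((0 : ℕ) ::ₘ (Finset.Icc 1 s).val.map id) + (Finset.Icc (s+1) k).val.map (Fc α' a) := by
          rw [Multiset.cons_add]
      _ = (s ::ₘ (Finset.Icc 1 s).val.map (· - 1)) + (Finset.Icc (s+1) k).val.map (Fc α' a) := by
          rw [key]
      _ = s ::ₘ ((Finset.Icc 1 s).val.map (· - 1) + (Finset.Icc (s+1) k).val.map (Fc α' a)) := by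
          rw [Multiset.cons_add]

lemma map_val_eq (s t : Finset ℕ) (f : ℕ → ℕ) (hinj : Set.InjOn f s) (h : s.image f = t) :
    s.val.map f = t.val := by
  rw [← h, Finset.image_val_of_injOn hinj]

lemma perA (k a : ℕ) (α : ℕ → ℕ) (hk : 1 ≤ k)
    (hmono : ∀ i j, 1 ≤ i → i ≤ j → j ≤ k → α j ≤ α i) :
    (Finset.Icc 1 k).val.map (Fc α a)
      + (Finset.Icc 1 (((Finset.Icc 1 k).filter fun i => a < α i).card)).val.map
          (fun i => i - 1 + (k - ((Finset.Icc 1 k).filter fun i => a < α i).card))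
    = (Finset.Icc 1 k).val.map (fun i => i - 1)
      + (Finset.Icc 1 (((Finset.Icc 1 k).filter fun i => a < α i).card)).val.map (Hc α k a) := by
  set m := ((Finset.Icc 1 k).filter fun i => a < α i).card with hm
  have hmk : m ≤ k := by
    calc m ≤ (Finset.Icc 1 k).card := Finset.card_filter_le _ _
      _ = k := by rw [Nat.card_Icc]; omega
  have mIcc : (Finset.Icc 1 k).filter (fun i => a < α i) = Finset.Icc 1 m :=
    filter_decr_eq_Icc k _ (by
      intro i j h1 h2 h3 hj
      exact lt_of_lt_of_le hj (hmono i j h1 h2 h3))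
  have hαm : ∀ i, 1 ≤ i → i ≤ k → (a < α i ↔ i ≤ m) := by
    intro i h1 h2
    constructor
    · intro h
      have : i ∈ (Finset.Icc 1 k).filter (fun i => a < α i) := by
        rw [Finset.mem_filter, Finset.mem_Icc]; exact ⟨⟨h1, h2⟩, h⟩
      rw [mIcc, Finset.mem_Icc] at this; omega
    · intro h
      have : i ∈ Finset.Icc 1 m := by rw [Finset.mem_Icc]; omega
      rw [← mIcc, Finset.mem_filter] at this; exact this.2
  have Htail : ∀ i, m + 1 ≤ i → i ≤ k → Hc α k a i = k - i := by
    intro i hi1 hi2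
    rw [Hc, Finset.filter_true_of_mem, Nat.card_Icc]
    · omega
    · intro u hu
      rw [Finset.mem_Icc] at hu
      have : α i ≤ a := by
        by_contra hcon
        have := (hαm i (by omega) hi2).mp (by omega)
        omega
      omega
  have hsplit : (Finset.Icc 1 k).val.map (Hc α k a)
      = (Finset.Icc 1 m).val.map (Hc α k a) + (Finset.Icc (m+1) k).val.map (Hc α k a) := by
    rw [icc_split_val m k hmk, Multiset.map_add]
  have htailmap : (Finset.Icc (m+1) k).val.map (Hc α k a) = (Finset.range (k - m)).val := by
    have h1 : (Finset.Icc (m+1) k).val.map (Hc α k a)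
        = (Finset.Icc (m+1) k).val.map (fun i => k - i) :=
      Multiset.map_congr rfl (fun i hi => by
        have hi' : i ∈ Finset.Icc (m+1) k := hi
        rw [Finset.mem_Icc] at hi'
        exact Htail i hi'.1 hi'.2)
    rw [h1]
    apply map_val_eq
    · intro x hx y hy h
      simp only [Finset.coe_Icc, Set.mem_Icc] at hx hy
      have h' : k - x = k - y := h
      omega
    · ext u
      simp only [Finset.mem_image, Finset.mem_Icc, Finset.mem_range]
      constructor
      · rintro ⟨v, ⟨hv1, hv2⟩, rfl⟩; omega
      · intro h; exact ⟨k - u, ⟨by omega, by omega⟩, by omega⟩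
  have hB : (Finset.Icc 1 m).val.map (fun i => i - 1 + (k - m)) = (Finset.Icc (k-m) (k-1)).val := by
    apply map_val_eq
    · intro x hx y hy h
      simp only [Finset.coe_Icc, Set.mem_Icc] at hx hy
      have h' : x - 1 + (k - m) = y - 1 + (k - m) := h
      omega
    · ext u
      simp only [Finset.mem_image, Finset.mem_Icc]
      constructor
      · rintro ⟨v, ⟨hv1, hv2⟩, rfl⟩; omega
      · intro h; exact ⟨u - (k - m) + 1, ⟨by omega, by omega⟩, by omega⟩
  have hD : (Finset.Icc 1 k).val.map (fun i => i - 1) = (Finset.range k).val := by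
    apply map_val_eq
    · intro x hx y hy h
      simp only [Finset.coe_Icc, Set.mem_Icc] at hx hy
      have h' : x - 1 = y - 1 := h
      omega
    · ext u
      simp only [Finset.mem_image, Finset.mem_Icc, Finset.mem_range]
      constructor
      · rintro ⟨v, ⟨hv1, hv2⟩, rfl⟩; omega
      · intro h; exact ⟨u + 1, ⟨by omega, by omega⟩, by omega⟩
  have hC : (Finset.range k).val = (Finset.range (k - m)).val + (Finset.Icc (k-m) (k-1)).val := by
    have hdisj : Disjoint (Finset.range (k-m)) (Finset.Icc (k-m) (k-1)) := by
      apply Finset.disjoint_left.mpr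
      intro u hu hv
      rw [Finset.mem_range] at hu
      rw [Finset.mem_Icc] at hv
      omega
    have : Finset.range k = (Finset.range (k-m)).disjUnion (Finset.Icc (k-m) (k-1)) hdisj := by
      ext u
      simp only [Finset.mem_range, Finset.mem_disjUnion, Finset.mem_Icc]
      omega
    rw [this]
    rfl
  rw [core a k α hmono, hsplit, htailmap, hB, hD, hC]
  ac_rfl

lemma filter_map_bind {β : Type} (s : Multiset ℕ) (p : ℕ → Prop) [DecidablePred p] (f : ℕ → β) :
    (s.filter p).map f = s.bind fun c => if p c then {f c} else 0 := by
  induction s using Multiset.induction with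
  | empty => simp
  | cons a s ih =>
    by_cases h : p a <;> simp [Multiset.filter_cons, h, ih]

lemma AL_R (n k : ℕ) (hn : 1 ≤ n) :
    AL (RR n k) (RR n k)
      = (Finset.Icc 1 k).val.bind fun i =>
          (Finset.range n).val.map fun c => (c, i - 1) := by
  unfold RR
  rw [AL_skewD]
  apply Multiset.bind_congr
  intro i hi
  have hi' : i ∈ Finset.Icc 1 k := hi
  rw [Finset.mem_Icc] at hi'
  have hIv : (Finset.range n).val.map (fun c => n - c) = (Finset.Icc 1 n).val := by
    apply map_val_eq
    · intro x hx y hy h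
      simp only [Finset.coe_range, Set.mem_Iio] at hx hy
      have h' : n - x = n - y := h
      omega
    · ext u
      simp only [Finset.mem_image, Finset.mem_range, Finset.mem_Icc]
      constructor
      · rintro ⟨v, hv, rfl⟩; omega
      · intro h; exact ⟨n - u, by omega, by omega⟩
  rw [← hIv, Multiset.map_map]
  apply Multiset.map_congr rfl
  intro c hc
  have hc' : c ∈ Finset.range n := hc
  rw [Finset.mem_range] at hc'
  show (arm _ (i, n - c), leg _ (i, n - c)) = (c, i - 1)
  have ha : arm (skewD 1 k (fun _ => 1) (fun _ => n)) (i, n - c) = c := by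
    rw [arm_skewD hi'.1 hi'.2 (by omega)]
    omega
  have hl : leg (skewD 1 k (fun _ => 1) (fun _ => n)) (i, n - c) = i - 1 := by
    rw [leg_skewD]
    have : ((Finset.Icc 1 k).filter fun u => u < i ∧ 1 ≤ n - c ∧ n - c ≤ n)
        = Finset.Icc 1 (i-1) := by
      ext u
      simp only [Finset.mem_filter, Finset.mem_Icc]
      omega
    rw [this, Nat.card_Icc]
    omega
  rw [ha, hl]

lemma AL_D (n k : ℕ) (α : ℕ → ℕ) (hk : 1 ≤ k)
    (hmono : ∀ i j, 1 ≤ i → i ≤ j → j ≤ k → α j ≤ α i) :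
    AL (DD k α) (DD k α)
      = (Finset.Icc 1 k).val.bind fun t =>
          (Finset.range (α t)).val.map fun c => (c, Hc α k c t) := by
  unfold DD
  rw [AL_skewD]
  -- reindex rows by reflection
  have hrefl : (Finset.Icc 1 k).val.map (fun t => k + 1 - t) = (Finset.Icc 1 k).val := by
    apply map_val_eq
    · intro x hx y hy h
      simp only [Finset.coe_Icc, Set.mem_Icc] at hx hy
      have h' : k + 1 - x = k + 1 - y := h
      omega
    · ext u
      simp only [Finset.mem_image, Finset.mem_Icc]
      constructor
      · rintro ⟨v, ⟨hv1, hv2⟩, rfl⟩; omega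
      · intro h; exact ⟨k + 1 - u, ⟨by omega, by omega⟩, by omega⟩
  conv_lhs => rw [← hrefl]
  rw [Multiset.bind_map]
  apply Multiset.bind_congr
  intro t ht
  have ht' : t ∈ Finset.Icc 1 k := ht
  rw [Finset.mem_Icc] at ht'
  have hkt : k + 1 - (k + 1 - t) = t := by omega
  have hIv : (Finset.range (α t)).val.map (fun c => α t - c) = (Finset.Icc 1 (α t)).val := by
    apply map_val_eq
    · intro x hx y hy h
      simp only [Finset.coe_range, Set.mem_Iio] at hx hy
      have h' : α t - x = α t - y := h
      omega
    · ext u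
      simp only [Finset.mem_image, Finset.mem_range, Finset.mem_Icc]
      constructor
      · rintro ⟨v, hv, rfl⟩; omega
      · intro h; exact ⟨α t - u, by omega, by omega⟩
  rw [hkt, ← hIv, Multiset.map_map]
  apply Multiset.map_congr rfl
  intro c hc
  have hc' : c ∈ Finset.range (α t) := hc
  rw [Finset.mem_range] at hc'
  show (arm _ (k + 1 - t, α t - c), leg _ (k + 1 - t, α t - c)) = (c, Hc α k c t)
  have ha : arm (skewD 1 k (fun _ => 1) (fun i => α (k + 1 - i))) (k + 1 - t, α t - c) = c := by
    rw [arm_skewD (by omega) (by omega) (by omega)]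
    rw [hkt]
    omega
  have hl : leg (skewD 1 k (fun _ => 1) (fun i => α (k + 1 - i))) (k + 1 - t, α t - c)
      = Hc α k c t := by
    rw [leg_skewD]
    have hset : ((Finset.Icc 1 k).filter fun u => u < k + 1 - t ∧ 1 ≤ α t - c ∧ α t - c ≤ α (k + 1 - u))
        = ((Finset.Icc (t+1) k).filter fun u => α t ≤ α u + c).image (fun u => k + 1 - u) := by
      ext u
      simp only [Finset.mem_filter, Finset.mem_Icc, Finset.mem_image]
      constructor
      · rintro ⟨⟨h1, h2⟩, h3, h4, h5⟩
        exact ⟨k + 1 - u, ⟨⟨by omega, by omega⟩, by omega⟩, by omega⟩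
      · rintro ⟨v, ⟨⟨hv1, hv2⟩, hv3⟩, rfl⟩
        have hvv : k + 1 - (k + 1 - v) = v := by omega
        refine ⟨⟨by omega, by omega⟩, by omega, by omega, ?_⟩
        rw [hvv]
        omega
    rw [hset, Finset.card_image_of_injOn, Hc]
    intro x hx y hy h
    simp only [Finset.coe_filter, Set.mem_setOf_eq, Finset.mem_Icc] at hx hy
    have h' : k + 1 - x = k + 1 - y := h
    omega
  rw [ha, hl]


/-- `SQ` as a single skew diagram. -/
lemma SQ_eq (n k : ℕ) (α : ℕ → ℕ) (hk : 1 ≤ k) :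
    SQ n k α = skewD 1 (2*k)
      (fun i => if i ≤ k then α 1 - α i + 1 else n + α 1 - α (i-k) + 1)
      (fun i => if i ≤ k then n + α 1 - α i else n + α 1) := by
  ext ⟨i, j⟩
  simp only [SQ, TT, VV, Finset.mem_union, mem_skewD]
  by_cases hik : i ≤ k <;> simp only [hik, if_true, if_false]
  · constructor
    · rintro (⟨h1, -, h3, h4⟩ | ⟨h1, h2, h3, h4⟩)
      · exact ⟨h1, by omega, h3, h4⟩
      · omega
    · rintro ⟨h1, h2, h3, h4⟩
      exact Or.inl ⟨h1, trivial, h3, h4⟩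
  · constructor
    · rintro (⟨h1, hf, h3, h4⟩ | ⟨h1, h2, h3, h4⟩)
      · exact absurd hf not_false
      · exact ⟨by omega, h2, h3, h4⟩
    · rintro ⟨h1, h2, h3, h4⟩
      exact Or.inr ⟨by omega, h2, h3, h4⟩

lemma AL_SQ (n k : ℕ) (α : ℕ → ℕ) (hn : 1 ≤ n) (hk : 1 ≤ k) (hq : α 1 ≤ n)
    (hmono : ∀ i j, 1 ≤ i → i ≤ j → j ≤ k → α j ≤ α i) :
    AL (SQ n k α) (SQ n k α)
      = ((Finset.Icc 1 k).val.bind fun i =>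
          (Finset.range n).val.map fun c => (c, Fc α c i))
        + ((Finset.Icc 1 k).val.bind fun t =>
          (Finset.range (α t)).val.map fun c =>
            (c, t - 1 + (k - ((Finset.Icc 1 k).filter fun u => c < α u).card))) := by
  set LO : ℕ → ℕ := fun i => if i ≤ k then α 1 - α i + 1 else n + α 1 - α (i-k) + 1 with hLO
  set HI : ℕ → ℕ := fun i => if i ≤ k then n + α 1 - α i else n + α 1 with hHI
  rw [SQ_eq n k α hk, AL_skewD, icc_split_val k (2*k) (by omega), Multiset.add_bind]
  congr 1
  · -- T part
    apply Multiset.bind_congr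
    intro i hi
    have hi' : i ∈ Finset.Icc 1 k := hi
    rw [Finset.mem_Icc] at hi'
    have hαi : α i ≤ α 1 := hmono 1 i le_rfl hi'.1 hi'.2
    have hLOi : LO i = α 1 - α i + 1 := by rw [hLO]; simp only [if_pos hi'.2]
    have hHIi : HI i = n + α 1 - α i := by rw [hHI]; simp only [if_pos hi'.2]
    have hIv : (Finset.range n).val.map (fun c => n + α 1 - α i - c)
        = (Finset.Icc (LO i) (HI i)).val := by
      apply map_val_eq
      · intro x hx y hy h
        simp only [Finset.coe_range, Set.mem_Iio] at hx hy
        have h' : n + α 1 - α i - x = n + α 1 - α i - y := h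
        omega
      · ext u
        simp only [Finset.mem_image, Finset.mem_range, Finset.mem_Icc, hLOi, hHIi]
        constructor
        · rintro ⟨v, hv, rfl⟩; omega
        · intro h; exact ⟨n + α 1 - α i - u, by omega, by omega⟩
    rw [← hIv, Multiset.map_map]
    apply Multiset.map_congr rfl
    intro c hc
    have hc' : c ∈ Finset.range n := hc
    rw [Finset.mem_range] at hc'
    show (arm _ (i, n + α 1 - α i - c), leg _ (i, n + α 1 - α i - c)) = (c, Fc α c i)
    have ha : arm (skewD 1 (2*k) LO HI) (i, n + α 1 - α i - c) = c := by
      rw [arm_skewD hi'.1 (by omega) (by rw [hLOi]; omega), hHIi]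
      omega
    have hl : leg (skewD 1 (2*k) LO HI) (i, n + α 1 - α i - c) = Fc α c i := by
      rw [leg_skewD]
      have hset : ((Finset.Icc 1 (2*k)).filter fun u =>
            u < i ∧ LO u ≤ n + α 1 - α i - c ∧ n + α 1 - α i - c ≤ HI u)
          = ((Finset.Icc 1 (i-1)).filter fun u => α u ≤ α i + c) := by
        ext u
        simp only [Finset.mem_filter, Finset.mem_Icc]
        constructor
        · rintro ⟨⟨h1, h2⟩, h3, h4, h5⟩
          have huk : u ≤ k := by omega
          rw [hLO] at h4; rw [hHI] at h5
          simp only [if_pos huk] at h4 h5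
          have hαu : α u ≤ α 1 := hmono 1 u le_rfl h1 (by omega)
          have hui : α i ≤ α u := hmono u i h1 (by omega) hi'.2
          exact ⟨⟨h1, by omega⟩, by omega⟩
        · rintro ⟨⟨h1, h2⟩, h3⟩
          have huk : u ≤ k := by omega
          have hαu : α u ≤ α 1 := hmono 1 u le_rfl h1 (by omega)
          have hui : α i ≤ α u := hmono u i h1 (by omega) hi'.2
          refine ⟨⟨h1, by omega⟩, by omega, ?_, ?_⟩
          · rw [hLO]; simp only [if_pos huk]; omega
          · rw [hHI]; simp only [if_pos huk]; omega
      rw [hset, Fc]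
    rw [ha, hl]
  · -- V part
    have hshift : (Finset.Icc 1 k).val.map (fun t => t + k) = (Finset.Icc (k+1) (2*k)).val := by
      apply map_val_eq
      · intro x hx y hy h
        have h' : x + k = y + k := h
        omega
      · rw [Finset.image_add_right_Icc]
        congr 1 <;> omega
    rw [← hshift, Multiset.bind_map]
    apply Multiset.bind_congr
    intro t ht
    have ht' : t ∈ Finset.Icc 1 k := ht
    rw [Finset.mem_Icc] at ht'
    have hαt : α t ≤ α 1 := hmono 1 t le_rfl ht'.1 ht'.2
    have htk : ¬ (t + k ≤ k) := by omega
    have htkk : t + k - k = t := by omega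
    have hLOt : LO (t + k) = n + α 1 - α t + 1 := by
      rw [hLO]; simp only [if_neg htk, htkk]
    have hHIt : HI (t + k) = n + α 1 := by rw [hHI]; simp only [if_neg htk]
    have hIv : (Finset.range (α t)).val.map (fun c => n + α 1 - c)
        = (Finset.Icc (LO (t+k)) (HI (t+k))).val := by
      apply map_val_eq
      · intro x hx y hy h
        simp only [Finset.coe_range, Set.mem_Iio] at hx hy
        have h' : n + α 1 - x = n + α 1 - y := h
        omega
      · ext u
        simp only [Finset.mem_image, Finset.mem_range, Finset.mem_Icc, hLOt, hHIt]
        constructor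
        · rintro ⟨v, hv, rfl⟩; omega
        · intro h; exact ⟨n + α 1 - u, by omega, by omega⟩
    rw [← hIv, Multiset.map_map]
    apply Multiset.map_congr rfl
    intro c hc
    have hc' : c ∈ Finset.range (α t) := hc
    rw [Finset.mem_range] at hc'
    show (arm _ (t + k, n + α 1 - c), leg _ (t + k, n + α 1 - c))
        = (c, t - 1 + (k - ((Finset.Icc 1 k).filter fun u => c < α u).card))
    have ha : arm (skewD 1 (2*k) LO HI) (t + k, n + α 1 - c) = c := by
      rw [arm_skewD (by omega) (by omega) (by rw [hLOt]; omega), hHIt]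
      omega
    have hl : leg (skewD 1 (2*k) LO HI) (t + k, n + α 1 - c)
        = t - 1 + (k - ((Finset.Icc 1 k).filter fun u => c < α u).card) := by
      rw [leg_skewD]
      have hdisj : Disjoint ((Finset.Icc 1 k).filter fun u => α u ≤ c)
          (Finset.Icc (k+1) (k+t-1)) := by
        apply Finset.disjoint_left.mpr
        intro u hu hv
        rw [Finset.mem_filter, Finset.mem_Icc] at hu
        rw [Finset.mem_Icc] at hv
        omega
      have hset : ((Finset.Icc 1 (2*k)).filter fun u =>
            u < t + k ∧ LO u ≤ n + α 1 - c ∧ n + α 1 - c ≤ HI u)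
          = ((Finset.Icc 1 k).filter fun u => α u ≤ c) ∪ Finset.Icc (k+1) (k+t-1) := by
        ext u
        simp only [Finset.mem_filter, Finset.mem_Icc, Finset.mem_union]
        constructor
        · rintro ⟨⟨h1, h2⟩, h3, h4, h5⟩
          by_cases huk : u ≤ k
          · left
            rw [hLO] at h4; rw [hHI] at h5
            simp only [if_pos huk] at h4 h5
            have hαu : α u ≤ α 1 := hmono 1 u le_rfl h1 huk
            exact ⟨⟨h1, huk⟩, by omega⟩
          · right
            rw [hLO] at h4
            simp only [if_neg huk] at h4
            omega
        · rintro (⟨⟨h1, h2⟩, h3⟩ | ⟨h1, h2⟩)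
          · have hαu : α u ≤ α 1 := hmono 1 u le_rfl h1 h2
            refine ⟨⟨h1, by omega⟩, by omega, ?_, ?_⟩
            · rw [hLO]; simp only [if_pos h2]; omega
            · rw [hHI]; simp only [if_pos h2]; omega
          · have huk : ¬ (u ≤ k) := by omega
            have hut : α t ≤ α (u - k) := hmono (u - k) t (by omega) (by omega) ht'.2
            refine ⟨⟨by omega, by omega⟩, by omega, ?_, ?_⟩
            · rw [hLO]; simp only [if_neg huk]; omega
            · rw [hHI]; simp only [if_neg huk]; omega
      rw [hset, Finset.card_union_of_disjoint hdisj, Nat.card_Icc]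
      have hcompl : ((Finset.Icc 1 k).filter fun u => c < α u).card
            + ((Finset.Icc 1 k).filter fun u => α u ≤ c).card = k := by
        have := Finset.card_filter_add_card_filter_not
          (s := Finset.Icc 1 k) (p := fun u => c < α u)
        rw [Nat.card_Icc] at this
        have hiff : ((Finset.Icc 1 k).filter fun u => ¬ c < α u)
            = ((Finset.Icc 1 k).filter fun u => α u ≤ c) := by
          apply Finset.filter_congr
          intro u _
          simp only [not_lt]
        rw [hiff] at this
        omega
      omega
    rw [ha, hl]

/-- The multiset of arm–leg pairs of `SQ` is the disjoint union of those of
`R` and of `D`. -/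
theorem AL_SQ_eq_R_union_D (n k : ℕ) (α : ℕ → ℕ) (hn : 0 < n) (hk : 0 < k)
    (hα1 : α 1 ≤ n) (hmono : ∀ i j, 1 ≤ i → i ≤ j → j ≤ k → α j ≤ α i) :
    AL (SQ n k α) (SQ n k α) = AL (RR n k) (RR n k) + AL (DD k α) (DD k α) := by
  have hn' : 1 ≤ n := hn
  have hk' : 1 ≤ k := hk
  rw [AL_SQ n k α hn' hk' hα1 hmono, AL_R n k hn', AL_D n k α hk' hmono]
  -- convert all four binds to binds over `range n`
  have swapT : ∀ (g : ℕ → ℕ → ℕ),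
      ((Finset.Icc 1 k).val.bind fun i => (Finset.range n).val.map fun c => (c, g i c))
        = (Finset.range n).val.bind fun c =>
            (Finset.Icc 1 k).val.map fun i => (c, g i c) := by
    intro g
    have e1 : ∀ i, ((Finset.range n).val.map fun c => ((c, g i c) : ℕ × ℕ))
        = (Finset.range n).val.bind fun c => {(c, g i c)} := by
      intro i
      rw [Multiset.bind_singleton]
    have e2 : ∀ c, ((Finset.Icc 1 k).val.map fun i => ((c, g i c) : ℕ × ℕ))
        = (Finset.Icc 1 k).val.bind fun i => {(c, g i c)} := by
      intro c
      rw [Multiset.bind_singleton]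
    rw [Multiset.bind_congr (fun i _ => e1 i), Multiset.bind_bind]
    exact Multiset.bind_congr (fun c _ => (e2 c).symm)
  have swapV : ∀ (g : ℕ → ℕ → ℕ),
      ((Finset.Icc 1 k).val.bind fun t => (Finset.range (α t)).val.map fun c => (c, g t c))
        = (Finset.range n).val.bind fun c =>
            (((Finset.Icc 1 k).filter fun u => c < α u).val.map fun t => (c, g t c)) := by
    intro g
    have e1 : ∀ t, 1 ≤ t → t ≤ k →
        ((Finset.range (α t)).val.map fun c => ((c, g t c) : ℕ × ℕ))
          = (Finset.range n).val.bind fun c => if c < α t then {(c, g t c)} else 0 := by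
      intro t h1 h2
      have hr : Finset.range (α t) = (Finset.range n).filter (· < α t) := by
        have : α t ≤ n := le_trans (hmono 1 t le_rfl h1 h2) hα1
        ext u
        simp only [Finset.mem_range, Finset.mem_filter]
        omega
      rw [hr, Finset.filter_val, filter_map_bind]
    have e2 : ∀ c, ((((Finset.Icc 1 k).filter fun u => c < α u).val).map fun t => ((c, g t c) : ℕ × ℕ))
        = (Finset.Icc 1 k).val.bind fun t => if c < α t then {(c, g t c)} else 0 := by
      intro c
      rw [Finset.filter_val, filter_map_bind]
    have h1 : ((Finset.Icc 1 k).val.bind fun t =>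
        (Finset.range (α t)).val.map fun c => ((c, g t c) : ℕ × ℕ))
        = (Finset.Icc 1 k).val.bind fun t =>
            (Finset.range n).val.bind fun c => if c < α t then {(c, g t c)} else 0 :=
      Multiset.bind_congr (fun t ht => by
        have ht' : t ∈ Finset.Icc 1 k := ht
        rw [Finset.mem_Icc] at ht'
        exact e1 t ht'.1 ht'.2)
    rw [h1, Multiset.bind_bind]
    exact Multiset.bind_congr (fun c _ => (e2 c).symm)
  rw [swapT (fun i c => Fc α c i), swapT (fun i c => i - 1),
    swapV (fun t c => t - 1 + (k - ((Finset.Icc 1 k).filter fun u => c < α u).card)),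
    swapV (fun t c => Hc α k c t),
    ← Multiset.bind_add, ← Multiset.bind_add]
  apply Multiset.bind_congr
  intro c _
  have mIcc : (Finset.Icc 1 k).filter (fun u => c < α u)
      = Finset.Icc 1 (((Finset.Icc 1 k).filter fun u => c < α u).card) :=
    filter_decr_eq_Icc k _ (by
      intro i j h1 h2 h3 hj
      exact lt_of_lt_of_le hj (hmono i j h1 h2 h3))
  rw [show (((Finset.Icc 1 k).filter fun u => c < α u)).val
      = (Finset.Icc 1 ((((Finset.Icc 1 k).filter fun u => c < α u)).card)).val
    from congrArg Finset.val mIcc]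
  have key := congrArg (Multiset.map (Prod.mk c)) (perA k c α hk' hmono)
  rw [Multiset.map_add, Multiset.map_add, Multiset.map_map, Multiset.map_map,
    Multiset.map_map, Multiset.map_map] at key
  exact key
end

section
/- Let k ≥ 1, n = k+1, α ∈ 𝓑, and 1 ≤ i ≤ k+1. Suppose some cell of T with arm length i−1 lies strictly above the diagonal of T, and let u be the smallest row index of such a cell. Then α_{u−i} ≥ u and α_{u−i+1} ≤ u (with the convention α₀ = k+1). -/
/-- `α` has Frobenius form `(λ₁,…,λ_m | λ₁−1,…,λ_m−1)` with
`k ≥ λ₁ > ⋯ > λ_m > 0`: equivalently `α_j = λ_j + j` for `1 ≤ j ≤ m`,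
`α_j ≤ m` for `m < j ≤ k`, and the conjugate partition satisfies
`α′_j = λ_j + j − 1` for `1 ≤ j ≤ m`. -/
def FrobB (k : ℕ) (α : ℕ → ℕ) (m : ℕ) (lam : ℕ → ℕ) : Prop :=
  (∀ j, 1 ≤ j → j ≤ m → 0 < lam j ∧ lam j ≤ k) ∧
  (∀ j j', 1 ≤ j → j < j' → j' ≤ m → lam j' < lam j) ∧
  (∀ j, 1 ≤ j → j ≤ m → α j = lam j + j) ∧
  (∀ j, m < j → j ≤ k → α j ≤ m) ∧
  (∀ j, 1 ≤ j → j ≤ m →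
    ((Finset.Icc 1 k).filter fun i => j ≤ α i).card = lam j + j - 1)

/-- `α ∈ 𝓑`. -/
def memB (k : ℕ) (α : ℕ → ℕ) : Prop := ∃ m lam, FrobB k α m lam

lemma mem_TT {n k : ℕ} {α : ℕ → ℕ} {a j : ℕ} :
    (a, j) ∈ TT n k α ↔ (1 ≤ a ∧ a ≤ k) ∧ (α 1 - α a + 1 ≤ j ∧ j ≤ n + α 1 - α a) := by
  simp only [TT, skewD, Finset.mem_biUnion, Finset.mem_image, Finset.mem_Icc, Prod.mk.injEq]
  constructor
  · rintro ⟨b, hb, c, hc, rfl, rfl⟩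
    exact ⟨hb, hc⟩
  · rintro ⟨hb, hc⟩
    exact ⟨a, hb, j, hc, rfl, rfl⟩

lemma arm_TT {n k : ℕ} {α : ℕ → ℕ} {a j : ℕ} (ha1 : 1 ≤ a) (hak : a ≤ k)
    (hj : α 1 - α a + 1 ≤ j) :
    arm (TT n k α) (a, j) = (n + α 1 - α a) - j := by
  unfold arm
  have hfil : ((TT n k α).filter fun y => y.1 = (a, j).1 ∧ (a, j).2 < y.2)
      = (Finset.Icc (j + 1) (n + α 1 - α a)).image fun c => (a, c) := by
    ext ⟨b, c⟩
    simp only [Finset.mem_filter, Finset.mem_image, Finset.mem_Icc, Prod.mk.injEq]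
    constructor
    · rintro ⟨hmem, rfl, hlt⟩
      rw [mem_TT] at hmem
      exact ⟨c, ⟨hlt, hmem.2.2⟩, rfl, rfl⟩
    · rintro ⟨c', ⟨h1, h2⟩, rfl, rfl⟩
      refine ⟨mem_TT.mpr ⟨⟨ha1, hak⟩, ⟨by omega, h2⟩⟩, rfl, by omega⟩
  rw [hfil, Finset.card_image_of_injective _ (fun x y h => by simpa using h), Nat.card_Icc]
  omega

/-- If `u` is the smallest row index of a cell of `T` with arm length `i−1`
strictly above the diagonal of `T`, then `α_{u−i} ≥ u` and `α_{u−i+1} ≤ u`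
(convention `α₀ = k+1`). -/
theorem techprop_part3 (k : ℕ) (α : ℕ → ℕ) (hk : 0 < k)
    (hα1 : α 1 ≤ k + 1) (hmono : ∀ i j, 1 ≤ i → i ≤ j → j ≤ k → α j ≤ α i)
    (hB : memB k α) (hα0 : α 0 = k + 1)
    (i : ℕ) (hi1 : 1 ≤ i) (hik : i ≤ k + 1) (u : ℕ)
    (hu : ∃ j, (u, j) ∈ TT (k + 1) k α ∧
      arm (TT (k + 1) k α) (u, j) = i - 1 ∧ k + 1 + α 1 < u + j)
    (hmin : ∀ a j, (a, j) ∈ TT (k + 1) k α →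
      arm (TT (k + 1) k α) (a, j) = i - 1 → k + 1 + α 1 < a + j → u ≤ a) :
    u ≤ α (u - i) ∧ α (u - i + 1) ≤ u := by
  obtain ⟨j, hmem, harm, hdiag⟩ := hu
  rw [mem_TT] at hmem
  obtain ⟨⟨hu1, huk⟩, hjlo, hjhi⟩ := hmem
  have hαu1 : α u ≤ α 1 := hmono 1 u le_rfl hu1 huk
  rw [arm_TT hu1 huk hjlo] at harm
  have hAu : α u + i ≤ u := by omega
  -- minimality in clean form
  have hP : ∀ a, 1 ≤ a → a ≤ k → α a + i ≤ a → u ≤ a := by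
    intro a ha1 hak haa
    have hαa1 : α a ≤ α 1 := hmono 1 a le_rfl ha1 hak
    refine hmin a ((k + 1 + α 1 - α a) - (i - 1))
      (mem_TT.mpr ⟨⟨ha1, hak⟩, by omega, by omega⟩) ?_ (by omega)
    rw [arm_TT ha1 hak (by omega)]
    omega
  simp only [memB, FrobB] at hB
  obtain ⟨m, lam, hlam, hdec, hαlam, hαsmall, hcount⟩ := hB
  -- u is beyond the Frobenius rank
  have hmu : m < u := by
    by_contra h
    push_neg at h
    have h1 := hαlam u hu1 h
    have h2 := (hlam u hu1 h).1
    omega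
  -- u ≤ m + i
  have humi : u ≤ m + i := by
    by_contra h
    push_neg at h
    have h1 : α (m + i) ≤ m := hαsmall (m + i) (by omega) (by omega)
    have h2 := hP (m + i) (by omega) (by omega) (by omega)
    omega
  constructor
  · -- claim 1 : u ≤ α (u - i)
    rcases Nat.eq_zero_or_pos (u - i) with h0 | h0
    · rw [h0, hα0]; omega
    · have hjm : u - i ≤ m := by omega
      by_contra hcon
      push_neg at hcon
      have he := hαlam (u - i) h0 hjm
      have hcnt := hcount (u - i) h0 hjm
      have hl1 := (hlam (u - i) h0 hjm).1
      have hwu : α (u - 1) < u - i := by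
        by_contra hw
        push_neg at hw
        have hsub : Finset.Icc 1 (u - 1) ⊆
            (Finset.Icc 1 k).filter (fun a => u - i ≤ α a) := by
          intro a ha
          simp only [Finset.mem_Icc] at ha
          simp only [Finset.mem_filter, Finset.mem_Icc]
          exact ⟨⟨ha.1, by omega⟩, le_trans hw (hmono a (u - 1) ha.1 ha.2 (by omega))⟩
        have hcard := Finset.card_le_card hsub
        rw [Nat.card_Icc] at hcard
        omega
      have := hP (u - 1) (by omega) (by omega) (by omega)
      omega
  · -- claim 2 : α (u - i + 1) ≤ u
    rcases Nat.lt_or_ge m (u - i + 1) with hgt | hle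
    · have := hαsmall (u - i + 1) hgt (by omega)
      omega
    · have he := hαlam (u - i + 1) (by omega) hle
      by_contra hcon
      push_neg at hcon
      have hcnt := hcount (u - i + 1) (by omega) hle
      have hsub : (Finset.Icc 1 k).filter (fun a => u - i + 1 ≤ α a) ⊆
          Finset.Icc 1 (u - 1) := by
        intro a ha
        simp only [Finset.mem_filter, Finset.mem_Icc] at ha
        simp only [Finset.mem_Icc]
        refine ⟨ha.1.1, ?_⟩
        by_contra hge
        push_neg at hge
        have := hmono u a hu1 (by omega) ha.1.2
        omega
      have hcard := Finset.card_le_card hsub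
      rw [Nat.card_Icc] at hcard
      omega
end
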